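/- Suppose k is odd and set s = (k−1)/2. If a is even with 2 ≤ a ≤ r−2, then z^{(a)}_s = z^{(a)}_{s+1}. -/
import Mathlib


/-- Orthogonal coordinates `u_i(λ)` of `λ + ρ` for the weight
`λ = λ_1 ω_1 + ⋯ + λ_r ω_r` of `D_r` given in fundamental-weight coordinates. -/
noncomputable def uCoord (r : ℕ) (lam : ℕ → ℤ) (i : ℕ) : ℝ :=
  if i = r then ((lam r : ℝ) - (lam (r - 1) : ℝ)) / 2
  else (∑ j ∈ Finset.Icc i (r - 2), (lam j : ℝ))
      + ((lam (r - 1) : ℝ) + (lam r : ℝ)) / 2 + ((r : ℝ) - (i : ℝ))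

/-- The level-`k` quantum dimension of the weight `λ` of `D_r`
(`h = 2r - 2` is the Coxeter number), given by the product over the
positive roots `e_i - e_j`, `e_i + e_j` (`1 ≤ i < j ≤ r`). -/
noncomputable def qdimD (r k : ℕ) (lam : ℕ → ℤ) : ℝ :=
  ∏ p ∈ (Finset.Icc 1 r ×ˢ Finset.Icc 1 r).filter (fun p => p.1 < p.2),
    (Real.sin (Real.pi * (uCoord r lam p.1 - uCoord r lam p.2) / (2 * (r : ℝ) - 2 + (k : ℝ)))
      * Real.sin (Real.pi * (uCoord r lam p.1 + uCoord r lam p.2) / (2 * (r : ℝ) - 2 + (k : ℝ))))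
    / (Real.sin (Real.pi * ((p.2 : ℝ) - (p.1 : ℝ)) / (2 * (r : ℝ) - 2 + (k : ℝ)))
      * Real.sin (Real.pi * (2 * (r : ℝ) - (p.1 : ℝ) - (p.2 : ℝ)) / (2 * (r : ℝ) - 2 + (k : ℝ))))

/-- The quantum dimension solution `z^{(a)}_m` of the `Q`-system of type `D_r`:
the specialization `Q^{(a)}_m(ρ/(h+k))` of the classical characters of the
Kirillov–Reshetikhin modules of type `D_r`. -/
noncomputable def zD (r k a m : ℕ) : ℝ :=
  if a = r - 1 ∨ a = r then
    qdimD r k (fun j => if j = a then (m : ℤ) else 0)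
  else if a % 2 = 1 then
    ∑ c ∈ (Fintype.piFinset (fun _ : Fin ((a + 1) / 2) => Finset.range (m + 1))).filter
        (fun c => ∑ i, c i = m),
      qdimD r k (fun j => ∑ i : Fin ((a + 1) / 2), if j = 2 * (i : ℕ) + 1 then (c i : ℤ) else 0)
  else
    ∑ c ∈ (Fintype.piFinset (fun _ : Fin (a / 2) => Finset.range (m + 1))).filter
        (fun c => ∑ i, c i ≤ m),
      qdimD r k (fun j => ∑ i : Fin (a / 2), if j = 2 * (i : ℕ) + 2 then (c i : ℤ) else 0)

lemma qdimD_zero (r k : ℕ) (hr : 4 ≤ r) (lam : ℕ → ℤ)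
    (h1 : lam 1 = 0) (hr1 : lam (r - 1) = 0) (hr0 : lam r = 0)
    (hsum : (2 : ℤ) * ∑ j ∈ Finset.Icc 1 (r - 2), lam j = (k : ℤ) + 1) :
    qdimD r k lam = 0 := by
  unfold qdimD
  apply Finset.prod_eq_zero (i := ((1 : ℕ), (2 : ℕ)))
  · simp only [Finset.mem_filter, Finset.mem_product, Finset.mem_Icc]
    omega
  · have hs2 : Finset.Icc 2 (r - 2) = (Finset.Icc 1 (r - 2)).erase 1 := by
      ext x
      simp only [Finset.mem_Icc, Finset.mem_erase]
      omega
    have hsum2 : ∑ j ∈ Finset.Icc 2 (r - 2), lam j = ∑ j ∈ Finset.Icc 1 (r - 2), lam j := by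
      rw [hs2]
      rw [Finset.sum_erase _ h1]
    have h12 : uCoord r lam 1 + uCoord r lam 2 = 2 * (r : ℝ) - 2 + (k : ℝ) := by
      unfold uCoord
      rw [if_neg (by omega : (1 : ℕ) ≠ r), if_neg (by omega : (2 : ℕ) ≠ r)]
      have hR : (2 : ℝ) * ∑ j ∈ Finset.Icc 1 (r - 2), (lam j : ℝ) = (k : ℝ) + 1 := by
        exact_mod_cast congrArg (Int.cast : ℤ → ℝ) hsum
      have hR2 : (∑ j ∈ Finset.Icc 2 (r - 2), (lam j : ℝ)) =
          ∑ j ∈ Finset.Icc 1 (r - 2), (lam j : ℝ) := by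
        exact_mod_cast congrArg (Int.cast : ℤ → ℝ) hsum2
      rw [hR2, hr1, hr0]
      push_cast
      have : (4 : ℝ) ≤ (r : ℝ) := by exact_mod_cast hr
      nlinarith [hR]
    have hne : (2 * (r : ℝ) - 2 + (k : ℝ)) ≠ 0 := by
      have : (4 : ℝ) ≤ (r : ℝ) := by exact_mod_cast hr
      have : (0 : ℝ) ≤ (k : ℝ) := Nat.cast_nonneg k
      nlinarith
    have : Real.sin (Real.pi * (uCoord r lam 1 + uCoord r lam 2) / (2 * (r : ℝ) - 2 + (k : ℝ)))
        = 0 := by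
      rw [h12, mul_div_assoc, div_self hne, mul_one, Real.sin_pi]
    simp [this]

/-- For odd level `k` with `s = (k-1)/2` and even `a` with `2 ≤ a ≤ r-2`,
`z^{(a)}_s = z^{(a)}_{s+1}`. -/
theorem stmt5 (r k : ℕ) (hr : 4 ≤ r) (hk : 1 ≤ k) (hkodd : k % 2 = 1)
    (a : ℕ) (ha2 : 2 ≤ a) (har : a ≤ r - 2) (haev : a % 2 = 0) :
    zD r k a ((k - 1) / 2) = zD r k a ((k - 1) / 2 + 1) := by
  set m := (k - 1) / 2 with hm
  have hk2 : k = 2 * m + 1 := by omega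
  have hno : ¬ (a = r - 1 ∨ a = r) := by omega
  unfold zD
  rw [if_neg hno, if_neg hno, if_neg (by omega : ¬ a % 2 = 1), if_neg (by omega : ¬ a % 2 = 1)]
  -- the vanishing of terms with total sum m + 1
  have hvanish : ∀ c : Fin (a / 2) → ℕ, (∑ i, c i = m + 1) →
      qdimD r k (fun j => ∑ i : Fin (a / 2), if j = 2 * (i : ℕ) + 2 then (c i : ℤ) else 0)
        = 0 := by
    intro c hc
    have hbound : ∀ i : Fin (a / 2), 2 * (i : ℕ) + 2 ≤ a := by
      intro i; have := i.isLt; omega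
    apply qdimD_zero r k hr _ ?_ ?_ ?_ ?_
    · apply Finset.sum_eq_zero; intro i _
      rw [if_neg (by omega)]
    · apply Finset.sum_eq_zero; intro i _
      have := hbound i
      rw [if_neg (by omega)]
    · apply Finset.sum_eq_zero; intro i _
      have := hbound i
      rw [if_neg (by omega)]
    · rw [Finset.sum_comm]
      have : ∀ i : Fin (a / 2),
          (∑ j ∈ Finset.Icc 1 (r - 2), if j = 2 * (i : ℕ) + 2 then (c i : ℤ) else 0)
            = (c i : ℤ) := by
        intro i
        rw [Finset.sum_ite_eq' (Finset.Icc 1 (r - 2)) (2 * (i : ℕ) + 2) (fun _ => (c i : ℤ))]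
        rw [if_pos (by simp only [Finset.mem_Icc]; have := hbound i; omega)]
      rw [Finset.sum_congr rfl (fun i _ => this i)]
      have : (∑ i : Fin (a / 2), (c i : ℤ)) = ((m : ℤ) + 1) := by
        exact_mod_cast congrArg (Nat.cast : ℕ → ℤ) hc
      rw [this]; push_cast [hk2]; ring
  rw [← Finset.sum_filter_of_ne
      (p := fun c : Fin (a / 2) → ℕ => ∑ i, c i ≤ m)
      (s := (Fintype.piFinset (fun _ : Fin (a / 2) => Finset.range (m + 1 + 1))).filter
        (fun c => ∑ i, c i ≤ m + 1))
      (f := fun c => qdimD r k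
        (fun j => ∑ i : Fin (a / 2), if j = 2 * (i : ℕ) + 2 then (c i : ℤ) else 0))
      ?_]
  · apply Finset.sum_congr ?_ (fun _ _ => rfl)
    rw [Finset.filter_filter]
    ext c
    simp only [Finset.mem_filter, Fintype.mem_piFinset, Finset.mem_range]
    constructor
    · rintro ⟨hlt, hle⟩
      exact ⟨fun i => Nat.lt_succ_of_lt (hlt i), Nat.le_succ_of_le hle, hle⟩
    · rintro ⟨hlt, _, hle⟩
      refine ⟨fun i => ?_, hle⟩
      have := Finset.single_le_sum (f := c) (fun j _ => Nat.zero_le _) (Finset.mem_univ i)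
      omega
  · intro c hc hne
    simp only [Finset.mem_filter, Fintype.mem_piFinset, Finset.mem_range] at hc
    by_contra h
    exact hne (hvanish c (by omega))
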